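/- arXiv:1703.07097 — 2 statements merged into one kernel-verified Lean document; each statement's English description precedes it below -/
import Mathlib

section
/- Let Γ be a z-knotted combinatorial triangulation with unique zigzag (x_1,…,x_n) (indices mod n). Then for every face F of Γ there are exactly three indices i with 1 ≤ i ≤ n such that {x_i, x_{i+1}, x_{i+2}} equals the vertex set of F, i.e., the unique zigzag passes through every face exactly thrice. -/
universe u v

/-- The data of an embedded graph: a simple graph together with a collection of
(triangular) faces, each face recorded as the finite set of its vertices. -/
structure PreTriangulation (V : Type u) where
  graph : SimpleGraph V
  faces : Set (Finset V)

namespace PreTriangulation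

variable {V : Type u} {V' : Type v}

/-- `T` is a combinatorial triangulation: a finite simple connected graph together with
a collection of faces, each face being a set of three pairwise adjacent vertices, such that
every edge lies in exactly two faces and two distinct faces share at most one edge. -/
structure IsTriangulation [DecidableEq V] (T : PreTriangulation V) : Prop where
  finiteVerts : Finite V
  connected : T.graph.Connected
  face_card : ∀ F ∈ T.faces, F.card = 3
  face_adj : ∀ F ∈ T.faces, ∀ x ∈ F, ∀ y ∈ F, x ≠ y → T.graph.Adj x y
  edge_in_two_faces : ∀ x y : V, T.graph.Adj x y →
    {F | F ∈ T.faces ∧ x ∈ F ∧ y ∈ F}.ncard = 2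
  faces_share_at_most_one_edge :
    ∀ F ∈ T.faces, ∀ G ∈ T.faces, F ≠ G → (F ∩ G).card ≤ 2

section

variable [DecidableEq V] [DecidableEq V']

/-- A zigzag in `T`: a cyclic sequence of vertices (encoded as a periodic function `ℤ → V`
whose minimal period `n` is the length of the zigzag, with `n > 3`) such that any two
consecutive vertices are distinct and adjacent, any three consecutive vertices lie in a
unique face, and the faces determined by two consecutive triples are distinct. -/
structure Zigzag (T : PreTriangulation V) where
  n : ℕ
  three_lt_n : 3 < n
  seq : ℤ → V
  periodic : ∀ i : ℤ, seq (i + n) = seq i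
  n_minimal : ∀ m : ℕ, 0 < m → (∀ i : ℤ, seq (i + m) = seq i) → n ≤ m
  seq_ne : ∀ i : ℤ, seq i ≠ seq (i + 1)
  seq_adj : ∀ i : ℤ, T.graph.Adj (seq i) (seq (i + 1))
  face : ℤ → Finset V
  face_mem : ∀ i : ℤ, face i ∈ T.faces
  subset_face : ∀ i : ℤ, ({seq i, seq (i + 1), seq (i + 2)} : Finset V) ⊆ face i
  face_unique : ∀ i : ℤ, ∀ G ∈ T.faces,
    ({seq i, seq (i + 1), seq (i + 2)} : Finset V) ⊆ G → G = face i
  face_ne : ∀ i : ℤ, face i ≠ face (i + 1)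

variable {T : PreTriangulation V}

/-- Two zigzags are equivalent if they agree up to a cyclic shift or up to a cyclic
shift combined with reversal. -/
def ZigzagEquiv (Z Z' : T.Zigzag) : Prop :=
  (∃ k : ℤ, ∀ i : ℤ, Z'.seq i = Z.seq (i + k)) ∨
  (∃ k : ℤ, ∀ i : ℤ, Z'.seq i = Z.seq (k - i))

/-- `T` is z-knotted: it has exactly one zigzag up to cyclic shift and reversal. -/
def ZKnotted (T : PreTriangulation V) [DecidableEq V] : Prop :=
  Nonempty T.Zigzag ∧ ∀ Z Z' : T.Zigzag, ZigzagEquiv Z Z'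

/-- `T` has exactly two zigzags up to cyclic shift and reversal. -/
def HasExactlyTwoZigzags (T : PreTriangulation V) [DecidableEq V] : Prop :=
  ∃ Z₁ Z₂ : T.Zigzag, ¬ ZigzagEquiv Z₁ Z₂ ∧
    ∀ Z : T.Zigzag, ZigzagEquiv Z Z₁ ∨ ZigzagEquiv Z Z₂

/-- `T` has exactly three zigzags up to cyclic shift and reversal. -/
def HasExactlyThreeZigzags (T : PreTriangulation V) [DecidableEq V] : Prop :=
  ∃ Z₁ Z₂ Z₃ : T.Zigzag, ¬ ZigzagEquiv Z₁ Z₂ ∧ ¬ ZigzagEquiv Z₁ Z₃ ∧ ¬ ZigzagEquiv Z₂ Z₃ ∧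
    ∀ Z : T.Zigzag, ZigzagEquiv Z Z₁ ∨ ZigzagEquiv Z Z₂ ∨ ZigzagEquiv Z Z₃

namespace Zigzag

/-- The zigzag passes from `x` to `y` (in this order) at some position. -/
def Passes (Z : T.Zigzag) (x y : V) : Prop :=
  ∃ i : ℤ, Z.seq i = x ∧ Z.seq (i + 1) = y

/-- The zigzag passes from `x` to `y` (in this order) at two distinct positions
of the cyclic sequence. -/
def PassesTwice (Z : T.Zigzag) (x y : V) : Prop :=
  ∃ i j : ℤ, (i : ZMod Z.n) ≠ (j : ZMod Z.n) ∧
    Z.seq i = x ∧ Z.seq (i + 1) = y ∧ Z.seq j = x ∧ Z.seq (j + 1) = y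

/-- The edge `{x, y}` is of first type: the zigzag contains both `x, y` and `y, x`
as pairs of consecutive vertices. -/
def FirstTypeEdge (Z : T.Zigzag) (x y : V) : Prop := Z.Passes x y ∧ Z.Passes y x

/-- The edge `{x, y}` is of second type: the zigzag contains the same ordered pair
(`x, y` or `y, x`) twice. -/
def SecondTypeEdge (Z : T.Zigzag) (x y : V) : Prop :=
  Z.PassesTwice x y ∨ Z.PassesTwice y x

/-- The number of positions of the cyclic sequence at which the pair of consecutive
vertices equals `{x, y}` (in either order). -/
noncomputable def passCount (Z : T.Zigzag) (x y : V) : ℕ :=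
  Nat.card {i : Fin Z.n //
    (Z.seq ((i : ℕ) : ℤ) = x ∧ Z.seq (((i : ℕ) : ℤ) + 1) = y) ∨
    (Z.seq ((i : ℕ) : ℤ) = y ∧ Z.seq (((i : ℕ) : ℤ) + 1) = x)}

/-- The number of positions of the cyclic sequence at which the triple of consecutive
vertices has vertex set equal to `F`. -/
noncomputable def faceCount (Z : T.Zigzag) (F : Finset V) : ℕ :=
  Nat.card {i : Fin Z.n //
    ({Z.seq ((i : ℕ) : ℤ), Z.seq (((i : ℕ) : ℤ) + 1), Z.seq (((i : ℕ) : ℤ) + 2)} :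
      Finset V) = F}

/-- The three consecutive vertices of the zigzag at position `i` are `x, y, z`. -/
def TripleAt (Z : T.Zigzag) (i : ℤ) (x y z : V) : Prop :=
  Z.seq i = x ∧ Z.seq (i + 1) = y ∧ Z.seq (i + 2) = z

/-- The zigzag has the cyclic form `x₁,y₁,z₁, …, x₂,y₂,z₂, …, x₃,y₃,z₃, …`:
the three triples occur in this cyclic order within one period. -/
def CyclicTriples (Z : T.Zigzag) (x₁ y₁ z₁ x₂ y₂ z₂ x₃ y₃ z₃ : V) : Prop :=
  ∃ (i : ℤ) (p q : ℕ), 0 < p ∧ p < q ∧ q < Z.n ∧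
    Z.TripleAt i x₁ y₁ z₁ ∧ Z.TripleAt (i + p) x₂ y₂ z₂ ∧ Z.TripleAt (i + q) x₃ y₃ z₃

/-- `F` is a `(1,1,2)`-face: exactly one of its three edges is of second type. -/
def Is112Face (Z : T.Zigzag) (F : Finset V) : Prop :=
  ∃ x y z : V, F = {x, y, z} ∧ x ≠ y ∧ x ≠ z ∧ y ≠ z ∧
    Z.SecondTypeEdge y z ∧ ¬ Z.SecondTypeEdge x y ∧ ¬ Z.SecondTypeEdge x z

/-- `F` is a `(2,2,2)`-face: all three of its edges are of second type. -/
def Is222Face (Z : T.Zigzag) (F : Finset V) : Prop :=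
  ∃ x y z : V, F = {x, y, z} ∧ x ≠ y ∧ x ≠ z ∧ y ≠ z ∧
    Z.SecondTypeEdge x y ∧ Z.SecondTypeEdge y z ∧ Z.SecondTypeEdge x z

/-- `F` is a `(1,1,2)`-face of odd type: with vertices `x, y, z`, where `{y, z}` is the
edge of second type and the zigzag twice passes from `y` to `z`, the zigzag has the
cyclic form `x,y,z, …, y,x,z, …, y,z,x, …`. -/
def Is112OddFace (Z : T.Zigzag) (F : Finset V) : Prop :=
  ∃ x y z : V, F = {x, y, z} ∧ x ≠ y ∧ x ≠ z ∧ y ≠ z ∧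
    Z.SecondTypeEdge y z ∧ ¬ Z.SecondTypeEdge x y ∧ ¬ Z.SecondTypeEdge x z ∧
    Z.PassesTwice y z ∧ Z.CyclicTriples x y z y x z y z x

/-- `F` is a `(1,1,2)`-face of even type: with vertices `x, y, z`, where `{y, z}` is the
edge of second type and the zigzag twice passes from `y` to `z`, the zigzag has the
cyclic form `x,y,z, …, y,z,x, …, y,x,z, …`. -/
def Is112EvenFace (Z : T.Zigzag) (F : Finset V) : Prop :=
  ∃ x y z : V, F = {x, y, z} ∧ x ≠ y ∧ x ≠ z ∧ y ≠ z ∧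
    Z.SecondTypeEdge y z ∧ ¬ Z.SecondTypeEdge x y ∧ ¬ Z.SecondTypeEdge x z ∧
    Z.PassesTwice y z ∧ Z.CyclicTriples x y z y z x y x z

/-- `F` is a `(2,2,2)`-face of first type: with vertices `x, y, z` such that the zigzag
twice passes from `x` to `y`, twice from `y` to `z` and twice from `z` to `x`, the
zigzag has the cyclic form `x,y,z, …, z,x,y, …, y,z,x, …`. -/
def Is222FirstFace (Z : T.Zigzag) (F : Finset V) : Prop :=
  ∃ x y z : V, F = {x, y, z} ∧ x ≠ y ∧ x ≠ z ∧ y ≠ z ∧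
    Z.PassesTwice x y ∧ Z.PassesTwice y z ∧ Z.PassesTwice z x ∧
    Z.CyclicTriples x y z z x y y z x

/-- `F` is a `(2,2,2)`-face of second type: with vertices `x, y, z` such that the zigzag
twice passes from `x` to `y`, twice from `y` to `z` and twice from `z` to `x`, the
zigzag has the cyclic form `x,y,z, …, y,z,x, …, z,x,y, …`. -/
def Is222SecondFace (Z : T.Zigzag) (F : Finset V) : Prop :=
  ∃ x y z : V, F = {x, y, z} ∧ x ≠ y ∧ x ≠ z ∧ y ≠ z ∧
    Z.PassesTwice x y ∧ Z.PassesTwice y z ∧ Z.PassesTwice z x ∧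
    Z.CyclicTriples x y z y z x z x y

/-- `a` is the vertex of the face `F` which does not lie on an edge of `F` of
second type. -/
def IsApex (Z : T.Zigzag) (F : Finset V) (a : V) : Prop :=
  a ∈ F ∧ ∀ y ∈ F, y ≠ a → ¬ Z.SecondTypeEdge a y

end Zigzag

end

section ConnectedSum

variable [DecidableEq V] [DecidableEq V']

/-- The map gluing `Γ'` onto `Γ`: a vertex of `F'` is sent to the corresponding
(under `g`) vertex of `F`, all other vertices of `Γ'` are kept. -/
noncomputable def glueMap [Nonempty V] (F : Finset V) (F' : Finset V') (g : V → V') (y : V') :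
    V ⊕ {y : V' // y ∉ F'} :=
  if h : y ∈ F' then Sum.inl (Function.invFunOn g ↑F y) else Sum.inr ⟨y, h⟩

/-- The connected sum `T #_g T'` of two triangulations along the faces `F` and `F'`,
via the identification `g` of the vertices of `F` with the vertices of `F'`:
the disjoint union of `T` and `T'` in which every vertex `v` of `F` is identified with
`g v` (and the edges of `F` are identified with the corresponding edges of `F'`),
whose faces are all faces of `T` other than `F` together with all faces of `T'`
other than `F'`. -/
noncomputable def connectedSum [Nonempty V] (T : PreTriangulation V) (T' : PreTriangulation V')
    (F : Finset V) (F' : Finset V') (g : V → V') :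
    PreTriangulation (V ⊕ {y : V' // y ∉ F'}) where
  graph :=
    { Adj := fun u v => u ≠ v ∧
        ((∃ x y : V, T.graph.Adj x y ∧ u = Sum.inl x ∧ v = Sum.inl y) ∨
         (∃ x y : V', T'.graph.Adj x y ∧ u = glueMap F F' g x ∧ v = glueMap F F' g y))
      symm := ⟨by
        rintro u v ⟨hne, h⟩
        refine ⟨hne.symm, ?_⟩
        rcases h with ⟨x, y, hxy, hu, hv⟩ | ⟨x, y, hxy, hu, hv⟩
        · exact Or.inl ⟨y, x, hxy.symm, hv, hu⟩
        · exact Or.inr ⟨y, x, hxy.symm, hv, hu⟩⟩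
      loopless := ⟨fun u h => h.1 rfl⟩ }
  faces :=
    {G | (∃ A ∈ T.faces, A ≠ F ∧ G = A.image Sum.inl) ∨
         (∃ A ∈ T'.faces, A ≠ F' ∧ G = A.image (glueMap F F' g))}

end ConnectedSum

/-- `T` and `T'` are isomorphic as graphs together with their collections of faces. -/
def IsIsoTo [DecidableEq V'] (T : PreTriangulation V) (T' : PreTriangulation V') : Prop :=
  ∃ e : V ≃ V', (∀ x y : V, T.graph.Adj x y ↔ T'.graph.Adj (e x) (e y)) ∧
    (∀ G : Finset V, G ∈ T.faces ↔ G.image e ∈ T'.faces)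

/-- The bipyramid `BP n`.  The two apices `a, b` are `Sum.inl true, Sum.inl false`;
the vertices `1, …, n` of the `n`-gon are `Sum.inr 0, …, Sum.inr (n-1)` (that is, the
paper's vertex `i` is `Sum.inr (i - 1)`). -/
def bp (n : ℕ) : PreTriangulation (Bool ⊕ ZMod n) where
  graph :=
    { Adj := fun u v =>
        match u, v with
        | Sum.inl _, Sum.inl _ => False
        | Sum.inl _, Sum.inr _ => True
        | Sum.inr _, Sum.inl _ => True
        | Sum.inr i, Sum.inr j => i ≠ j ∧ (j = i + 1 ∨ i = j + 1)
      symm := ⟨by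
        rintro (s | i) (t | j) h
        · exact h.elim
        · trivial
        · trivial
        · exact ⟨h.1.symm, h.2.symm⟩⟩
      loopless := ⟨by
        rintro (s | i) h
        · exact h
        · exact h.1 rfl⟩ }
  faces := {G | ∃ (s : Bool) (i : ZMod n), G = {Sum.inl s, Sum.inr i, Sum.inr (i + 1)}}

/-- The complete graph on four vertices regarded as a combinatorial triangulation whose
faces are all four 3-element vertex subsets. -/
def k4 : PreTriangulation (Fin 4) where
  graph := ⊤
  faces := {G | G.card = 3}

/-- The cyclic sequence `a, 1+c, 2+c, b, 3+c, 4+c, …, a, n-1+c, n+c, b, 1+c, 2+c, a, 3+c, 4+c,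
…, b, n-1+c, n+c` in the bipyramid `BP n` (for `n` even), of length `3 n`, written in the
paper's labels; `c` is an offset.  Here `a = Sum.inl true`, `b = Sum.inl false` and the
paper's vertex `i` is `Sum.inr (i - 1)`. -/
def bpZigSeq (n : ℕ) (c : ZMod n) : ℤ → Bool ⊕ ZMod n := fun i =>
  let j : ℕ := (i % (3 * (n : ℤ))).toNat
  if j % 3 = 0 then Sum.inl (decide (j / 3 % 2 = 0))
  else Sum.inr (((2 * (j / 3) + (if j % 3 = 1 then 0 else 1) : ℕ) : ZMod n) + c)

end PreTriangulation

/-!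
A flag is an ordered triple `(x, y, z)` spanning a face. Sending it to `(y, z, w)`, where
`{y, z, w}` is the other face on the edge `yz`, is a permutation of the flags, and reversal
`(x, y, z) ↦ (z, y, x)` conjugates it to its inverse. The flags of a zigzag form one orbit,
every orbit comes from a zigzag, and no flag of a zigzag is the reversal of a flag of the same
zigzag: otherwise the zigzag would read the same backwards, forcing a repeated vertex at distance
one or two. So if `Γ` is z-knotted, reversal exchanges the orbit of its zigzag with the remaining
flags, and the six flags of every face split three and three between the two.
-/

lemma ncard_setOf_triple_eq {V : Type u} [DecidableEq V] {x y z : V} (hxy : x ≠ y) (hxz : x ≠ z)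
    (hyz : y ≠ z) :
    {p : V × V × V | ({p.1, p.2.1, p.2.2} : Finset V) = {x, y, z}}.ncard = 6 := by
  have : {p : V × V × V | ({p.1, p.2.1, p.2.2} : Finset V) = {x, y, z}} =
      ↑({(x, y, z), (y, z, x), (z, x, y), (z, y, x), (y, x, z), (x, z, y)} :
        Finset (V × V × V)) := by
    ext ⟨a, b, c⟩
    simp only [Set.mem_ofPred_eq, Finset.coe_insert, Finset.coe_singleton, Set.mem_insert_iff,
      Set.mem_singleton_iff, Prod.mk.injEq]
    constructor
    · intro h
      obtain ⟨hab, hac, hbc⟩ : a ≠ b ∧ a ≠ c ∧ b ≠ c := by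
        rw [← Finset.card_triple_eq_three_iff, h, Finset.card_triple_eq_three_iff]
        exact ⟨hxy, hxz, hyz⟩
      have hmem (v : V) (hv : v ∈ ({a, b, c} : Finset V)) : v = x ∨ v = y ∨ v = z := by
        simpa [h] using hv
      rcases hmem a (by simp) with rfl | rfl | rfl <;>
        rcases hmem b (by simp) with rfl | rfl | rfl <;>
        rcases hmem c (by simp) with rfl | rfl | rfl <;> simp_all
    · rintro (⟨rfl, rfl, rfl⟩ | ⟨rfl, rfl, rfl⟩ | ⟨rfl, rfl, rfl⟩ |
        ⟨rfl, rfl, rfl⟩ | ⟨rfl, rfl, rfl⟩ | ⟨rfl, rfl, rfl⟩) <;> ext <;> simp <;> tauto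
  rw [this, Set.ncard_coe_finset]
  simp [Finset.card_insert_of_notMem, hxy, hxz, hyz, hxy.symm, hxz.symm, hyz.symm]

namespace PreTriangulation

variable {V : Type u} [DecidableEq V] {T : PreTriangulation V}

lemma IsTriangulation.existsUnique_other_face (hT : T.IsTriangulation) {y z : V}
    (hyz : T.graph.Adj y z) {F : Finset V} (hF : F ∈ T.faces) (hy : y ∈ F) (hz : z ∈ F) :
    ∃! G, (G ∈ T.faces ∧ y ∈ G ∧ z ∈ G) ∧ G ≠ F := by
  have hFmem : F ∈ {H | H ∈ T.faces ∧ y ∈ H ∧ z ∈ H} := ⟨hF, hy, hz⟩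
  have : ({H | H ∈ T.faces ∧ y ∈ H ∧ z ∈ H} \ {F}).ncard = 1 := by
    rw [Set.ncard_sdiff_singleton_of_mem hFmem, hT.edge_in_two_faces y z hyz]
  obtain ⟨G, hG⟩ := Set.ncard_eq_one.mp this
  exact ⟨G, (Set.ext_iff.mp hG G).mpr rfl, fun H hH => (Set.ext_iff.mp hG H).mp hH⟩

lemma IsTriangulation.exists_sdiff_pair_eq_singleton (hT : T.IsTriangulation) {G : Finset V}
    (hG : G ∈ T.faces) {y z : V} (hy : y ∈ G) (hz : z ∈ G) (hyz : y ≠ z) :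
    ∃ w, G \ {y, z} = {w} := by
  rw [← Finset.card_eq_one, Finset.card_sdiff_of_subset (Finset.insert_subset hy
    (Finset.singleton_subset_iff.mpr hz)), Finset.card_pair hyz, hT.face_card G hG]

@[ext]
structure Flag (T : PreTriangulation V) where
  fst : V
  snd : V
  thd : V
  mem_faces : ({fst, snd, thd} : Finset V) ∈ T.faces

namespace Flag

def verts (a : Flag T) : Finset V := {a.fst, a.snd, a.thd}

def toTriple (a : Flag T) : V × V × V := (a.fst, a.snd, a.thd)

lemma toTriple_injective : Function.Injective (toTriple : Flag T → V × V × V) := fun a b h => by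
  simp only [toTriple, Prod.mk.injEq] at h
  exact Flag.ext h.1 h.2.1 h.2.2

lemma finite (hT : T.IsTriangulation) : Finite (Flag T) :=
  have := hT.finiteVerts
  Finite.of_injective _ toTriple_injective

lemma distinct (hT : T.IsTriangulation) (a : Flag T) :
    a.fst ≠ a.snd ∧ a.fst ≠ a.thd ∧ a.snd ≠ a.thd :=
  Finset.card_triple_eq_three_iff.mp (hT.face_card _ a.mem_faces)

lemma card_verts (hT : T.IsTriangulation) (a : Flag T) : a.verts.card = 3 :=
  hT.face_card _ a.mem_faces

def reverse (a : Flag T) : Flag T :=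
  ⟨a.thd, a.snd, a.fst, by
    rw [show ({a.thd, a.snd, a.fst} : Finset V) = {a.fst, a.snd, a.thd} by
      ext; simp only [Finset.mem_insert, Finset.mem_singleton]; tauto]
    exact a.mem_faces⟩

@[simp]
lemma reverse_reverse (a : Flag T) : a.reverse.reverse = a := rfl

lemma reverse_injective : Function.Injective (reverse : Flag T → Flag T) :=
  Function.LeftInverse.injective reverse_reverse

@[simp]
lemma verts_reverse (a : Flag T) : a.reverse.verts = a.verts := by
  ext; simp only [verts, reverse, Finset.mem_insert, Finset.mem_singleton]; tauto

def IsNext (a b : Flag T) : Prop :=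
  b.fst = a.snd ∧ b.snd = a.thd ∧ b.verts ≠ a.verts

lemma IsNext.reverse {a b : Flag T} (h : IsNext a b) : IsNext b.reverse a.reverse :=
  ⟨h.2.1.symm, h.1.symm, by simpa only [verts_reverse] using h.2.2.symm⟩

lemma existsUnique_isNext (hT : T.IsTriangulation) (a : Flag T) : ∃! b, IsNext a b := by
  obtain ⟨-, -, hyz⟩ := a.distinct hT
  have hy : a.snd ∈ a.verts := by simp [verts]
  have hz : a.thd ∈ a.verts := by simp [verts]
  obtain ⟨G, ⟨⟨hGf, hyG, hzG⟩, hGa⟩, hG⟩ :=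
    hT.existsUnique_other_face (hT.face_adj _ a.mem_faces _ hy _ hz hyz) a.mem_faces hy hz
  obtain ⟨w, hw⟩ := hT.exists_sdiff_pair_eq_singleton hGf hyG hzG hyz
  have hGw : G = {a.snd, a.thd, w} := by
    rw [← Finset.union_sdiff_of_subset (Finset.insert_subset hyG
      (Finset.singleton_subset_iff.mpr hzG)), hw]
    ext; simp
  refine ⟨⟨a.snd, a.thd, w, hGw ▸ hGf⟩, ⟨rfl, rfl, fun h => hGa (hGw.trans h)⟩, ?_⟩
  rintro b ⟨h1, h2, hne⟩
  have hbG : b.verts = G :=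
    hG _ ⟨⟨b.mem_faces, by simp [verts, ← h1], by simp [verts, ← h2]⟩, hne⟩
  have hb3 : b.thd ∈ G \ {a.snd, a.thd} := by
    obtain ⟨-, h13, h23⟩ := b.distinct hT
    simp only [Finset.mem_sdiff, Finset.mem_insert, Finset.mem_singleton, ← hbG, verts]
    rw [← h1, ← h2]
    exact ⟨by simp, by tauto⟩
  rw [hw, Finset.mem_singleton] at hb3
  exact Flag.ext h1 h2 hb3

noncomputable def next (hT : T.IsTriangulation) (a : Flag T) : Flag T :=
  (existsUnique_isNext hT a).exists.choose

lemma isNext_next (hT : T.IsTriangulation) (a : Flag T) : IsNext a (next hT a) :=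
  (existsUnique_isNext hT a).exists.choose_spec

lemma eq_next_of_isNext (hT : T.IsTriangulation) {a b : Flag T} (h : IsNext a b) :
    b = next hT a :=
  (existsUnique_isNext hT a).unique h (isNext_next hT a)

lemma next_reverse_next (hT : T.IsTriangulation) (a : Flag T) :
    next hT (next hT a).reverse = a.reverse :=
  (eq_next_of_isNext hT (isNext_next hT a).reverse).symm

end Flag

/-- The inverse step is the step conjugated by reversal. -/
noncomputable def flagStep (hT : T.IsTriangulation) : Equiv.Perm (Flag T) where
  toFun := Flag.next hT
  invFun a := (Flag.next hT a.reverse).reverse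
  left_inv a := by simp only [Flag.next_reverse_next, Flag.reverse_reverse]
  right_inv a := by rw [Flag.next_reverse_next, Flag.reverse_reverse]

lemma flagStep_zpow_reverse (hT : T.IsTriangulation) (t : ℤ) (a : Flag T) :
    (flagStep hT ^ t) a.reverse = ((flagStep hT ^ (-t)) a).reverse := by
  let ρ : Equiv.Perm (Flag T) := Function.Involutive.toPerm Flag.reverse Flag.reverse_reverse
  have hconj : (flagStep hT)⁻¹ = ρ * flagStep hT * ρ⁻¹ := Equiv.ext fun _ => rfl
  rw [zpow_neg, ← inv_zpow, hconj, conj_zpow]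
  rfl

lemma fst_flagStep_zpow_add_one (hT : T.IsTriangulation) (t : ℤ) (a : Flag T) :
    ((flagStep hT ^ (t + 1)) a).fst = ((flagStep hT ^ t) a).snd := by
  rw [add_comm, zpow_one_add, Equiv.Perm.mul_apply]
  exact (Flag.isNext_next hT _).1

lemma snd_flagStep_zpow_add_one (hT : T.IsTriangulation) (t : ℤ) (a : Flag T) :
    ((flagStep hT ^ (t + 1)) a).snd = ((flagStep hT ^ t) a).thd := by
  rw [add_comm, zpow_one_add, Equiv.Perm.mul_apply]
  exact (Flag.isNext_next hT _).2.1

lemma verts_flagStep_ne (hT : T.IsTriangulation) (a : Flag T) :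
    (flagStep hT a).verts ≠ a.verts :=
  (Flag.isNext_next hT a).2.2

namespace Flag

variable (hT : T.IsTriangulation) (a : Flag T)

noncomputable def orbitSeq (t : ℤ) : V := ((flagStep hT ^ t) a).fst

@[simp]
lemma orbitSeq_add_one (t : ℤ) : a.orbitSeq hT (t + 1) = ((flagStep hT ^ t) a).snd :=
  fst_flagStep_zpow_add_one hT t a

@[simp]
lemma orbitSeq_add_two (t : ℤ) : a.orbitSeq hT (t + 2) = ((flagStep hT ^ t) a).thd := by
  rw [show t + 2 = t + 1 + 1 by ring, orbitSeq_add_one, snd_flagStep_zpow_add_one]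

@[simp]
lemma orbitSeq_zero : a.orbitSeq hT 0 = a.fst := rfl

@[simp]
lemma orbitSeq_one : a.orbitSeq hT 1 = a.snd := by
  simpa using a.orbitSeq_add_one hT 0

@[simp]
lemma orbitSeq_two : a.orbitSeq hT 2 = a.thd := by
  simpa using a.orbitSeq_add_two hT 0

lemma verts_flagStep_zpow (t : ℤ) :
    ((flagStep hT ^ t) a).verts =
      {a.orbitSeq hT t, a.orbitSeq hT (t + 1), a.orbitSeq hT (t + 2)} := by
  rw [orbitSeq_add_one, orbitSeq_add_two]
  rfl

lemma flagStep_zpow_eq_self {m : ℤ} (h : ∀ t, a.orbitSeq hT (t + m) = a.orbitSeq hT t) :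
    (flagStep hT ^ m) a = a := by
  have h' (k : ℤ) : a.orbitSeq hT (m + k) = a.orbitSeq hT k := by rw [add_comm, h]
  ext
  · simpa [orbitSeq] using h' 0
  · simpa using h' 1
  · simpa using h' 2

lemma orbitSeq_add_minimalPeriod (t : ℤ) :
    a.orbitSeq hT (t + Function.minimalPeriod (flagStep hT) a) = a.orbitSeq hT t := by
  rw [orbitSeq, zpow_add, Equiv.Perm.mul_apply, zpow_natCast, ← Equiv.Perm.iterate_eq_pow,
    Function.iterate_minimalPeriod, orbitSeq]

lemma three_lt_minimalPeriod : 3 < Function.minimalPeriod (flagStep hT) a := by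
  have := finite hT
  have hpos := Function.minimalPeriod_pos_of_mem_periodicPts
    ((flagStep hT).injective.mem_periodicPts a)
  have hper := a.orbitSeq_add_minimalPeriod hT
  by_contra! hle
  generalize Function.minimalPeriod (flagStep hT) a = k at hpos hper hle
  obtain ⟨h12, h13, -⟩ := a.distinct hT
  interval_cases k
  · exact h12 (by simpa using (hper 0).symm)
  · exact h13 (by simpa using (hper 0).symm)
  · refine verts_flagStep_ne hT a ?_
    have h3 : a.orbitSeq hT 3 = a.fst := by simpa using hper 0
    rw [← zpow_one (flagStep hT), verts_flagStep_zpow, show (1 : ℤ) + 1 = 2 by norm_num,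
      show (1 : ℤ) + 2 = 3 by norm_num, orbitSeq_one, orbitSeq_two, h3]
    ext; simp only [verts, Finset.mem_insert, Finset.mem_singleton]; tauto

noncomputable def toZigzag : T.Zigzag where
  n := Function.minimalPeriod (flagStep hT) a
  three_lt_n := a.three_lt_minimalPeriod hT
  seq := a.orbitSeq hT
  periodic := a.orbitSeq_add_minimalPeriod hT
  n_minimal m hm h := Function.IsPeriodicPt.minimalPeriod_le hm <| by
    rw [Function.IsPeriodicPt, Function.IsFixedPt, Equiv.Perm.iterate_eq_pow, ← zpow_natCast]
    exact a.flagStep_zpow_eq_self hT h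
  seq_ne t := by
    rw [orbitSeq_add_one]
    exact (distinct hT _).1
  seq_adj t := by
    rw [orbitSeq_add_one]
    exact hT.face_adj _ ((flagStep hT ^ t) a).mem_faces ((flagStep hT ^ t) a).fst (by simp) _
      (by simp) (distinct hT _).1
  face t := ((flagStep hT ^ t) a).verts
  face_mem t := mem_faces _
  subset_face t := (a.verts_flagStep_zpow hT t).symm.subset
  face_unique t G hG hsub := by
    rw [← verts_flagStep_zpow] at hsub
    refine (Finset.eq_of_subset_of_card_le hsub ?_).symm
    rw [hT.face_card G hG, card_verts hT]
  face_ne t := by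
    rw [add_comm, zpow_one_add, Equiv.Perm.mul_apply]
    exact (verts_flagStep_ne hT _).symm

@[simp]
lemma toZigzag_seq : (a.toZigzag hT).seq = a.orbitSeq hT := rfl

end Flag

namespace Zigzag

variable (Z : T.Zigzag)

lemma seq_ne_seq_add_two (hT : T.IsTriangulation) (i : ℤ) : Z.seq i ≠ Z.seq (i + 2) := by
  -- otherwise the triple is just an edge, contained in both faces on that edge
  intro h
  have hsub := Z.subset_face i
  obtain ⟨G, ⟨⟨hG, hxG, hyG⟩, hGne⟩, -⟩ := hT.existsUnique_other_face (Z.seq_adj i)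
    (Z.face_mem i) (hsub (by simp)) (hsub (by simp))
  refine hGne (Z.face_unique i G hG ?_)
  rw [← h]
  simp [Finset.insert_subset_iff, hxG, hyG]

lemma face_eq (hT : T.IsTriangulation) (i : ℤ) :
    Z.face i = {Z.seq i, Z.seq (i + 1), Z.seq (i + 2)} := by
  refine (Finset.eq_of_subset_of_card_le (Z.subset_face i) ?_).symm
  rw [hT.face_card _ (Z.face_mem i), Finset.card_triple_eq_three_iff.mpr
    ⟨Z.seq_ne i, Z.seq_ne_seq_add_two hT i, by simpa [add_assoc] using Z.seq_ne (i + 1)⟩]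

def flag (hT : T.IsTriangulation) (i : ℤ) : Flag T :=
  ⟨Z.seq i, Z.seq (i + 1), Z.seq (i + 2), Z.face_eq hT i ▸ Z.face_mem i⟩

lemma verts_flag (hT : T.IsTriangulation) (i : ℤ) : (Z.flag hT i).verts = Z.face i :=
  (Z.face_eq hT i).symm

lemma flag_add_one (hT : T.IsTriangulation) (i : ℤ) :
    Z.flag hT (i + 1) = flagStep hT (Z.flag hT i) :=
  Flag.eq_next_of_isNext hT ⟨rfl, congrArg Z.seq (by ring), by
    rw [verts_flag, verts_flag]
    exact (Z.face_ne i).symm⟩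

lemma flag_add (hT : T.IsTriangulation) (i t : ℤ) :
    Z.flag hT (i + t) = (flagStep hT ^ t) (Z.flag hT i) := by
  induction t using Int.induction_on with
  | zero => simp
  | succ k ih =>
    rw [← add_assoc, flag_add_one, ih, add_comm (k : ℤ), zpow_one_add, Equiv.Perm.mul_apply]
  | pred k ih =>
    apply (flagStep hT).injective
    rw [← flag_add_one, show i + (-(k : ℤ) - 1) + 1 = i + -k by ring, ih,
      ← Equiv.Perm.mul_apply, ← zpow_one_add, show 1 + (-(k : ℤ) - 1) = -k by ring]

lemma periodic_flag (hT : T.IsTriangulation) : Function.Periodic (Z.flag hT) Z.n := fun i => by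
  ext
  · exact Z.periodic i
  · exact (congrArg Z.seq (add_right_comm _ _ _)).trans (Z.periodic (i + 1))
  · exact (congrArg Z.seq (add_right_comm _ _ _)).trans (Z.periodic (i + 2))

lemma n_le_natAbs_of_periodic {d : ℤ} (hd : d ≠ 0) (h : Function.Periodic Z.seq d) :
    Z.n ≤ d.natAbs := by
  refine Z.n_minimal _ (Int.natAbs_pos.mpr hd) ?_
  rw [Int.natCast_natAbs]
  rcases abs_choice d with hd' | hd' <;> rw [hd']
  · exact h
  · exact h.neg

lemma periodic_seq_of_flag_eq (hT : T.IsTriangulation) {i j : ℤ} (h : Z.flag hT i = Z.flag hT j) :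
    Function.Periodic Z.seq (j - i) := fun t => by
  have := congrArg (fun a => ((flagStep hT ^ (t - i)) a).fst) h
  simp only [← flag_add] at this
  calc Z.seq (t + (j - i)) = Z.seq (j + (t - i)) := by ring_nf
    _ = Z.seq (i + (t - i)) := this.symm
    _ = Z.seq t := by ring_nf

lemma injOn_flag (hT : T.IsTriangulation) : Set.InjOn (Z.flag hT) (Set.Ico 0 Z.n) := by
  rintro i ⟨hi0, hin⟩ j ⟨hj0, hjn⟩ h
  by_contra hne
  have := Z.n_le_natAbs_of_periodic (sub_ne_zero.mpr (Ne.symm hne))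
    (Z.periodic_seq_of_flag_eq hT h)
  omega

lemma not_forall_seq_eq_seq_sub (hT : T.IsTriangulation) (c : ℤ) :
    ¬ ∀ s, Z.seq s = Z.seq (c - s) := by
  intro h
  obtain ⟨k, rfl | rfl⟩ := Int.even_or_odd' c
  · exact Z.seq_ne_seq_add_two hT (k - 1) (by rw [h (k - 1)]; ring_nf)
  · exact Z.seq_ne k (by rw [h k]; ring_nf)

lemma flag_ne_reverse_flag (hT : T.IsTriangulation) (i j : ℤ) :
    Z.flag hT i ≠ (Z.flag hT j).reverse := by
  intro h
  refine Z.not_forall_seq_eq_seq_sub hT (i + j + 2) fun s => ?_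
  have := congrArg (fun a => ((flagStep hT ^ (s - i)) a).fst) h
  simp only [flagStep_zpow_reverse, ← flag_add] at this
  calc Z.seq s = Z.seq (i + (s - i)) := by ring_nf
    _ = Z.seq (j + -(s - i) + 2) := this
    _ = Z.seq (i + j + 2 - s) := by ring_nf

lemma faceCount_eq_ncard (hT : T.IsTriangulation) (F : Finset V) :
    Z.faceCount F = (Set.range (Z.flag hT) ∩ {a | a.verts = F}).ncard := by
  have hmem (k : Fin Z.n) : ((k : ℕ) : ℤ) ∈ Set.Ico 0 (Z.n : ℤ) :=
    ⟨by positivity, Int.ofNat_lt.mpr k.2⟩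
  have hinj : Function.Injective fun i : Fin Z.n => Z.flag hT i := fun i j h =>
    Fin.ext (by exact_mod_cast Z.injOn_flag hT (hmem i) (hmem j) h)
  have himage : (fun i : Fin Z.n => Z.flag hT i) '' {i | (Z.flag hT i).verts = F} =
      Set.range (Z.flag hT) ∩ {a | a.verts = F} := by
    ext a
    constructor
    · rintro ⟨i, hi, rfl⟩
      exact ⟨⟨_, rfl⟩, hi⟩
    · rintro ⟨⟨t, rfl⟩, ht⟩
      have hn : (0 : ℤ) < Z.n := by have := Z.three_lt_n; omega
      have hmod : Z.flag hT ((t % Z.n).toNat : ℤ) = Z.flag hT t := by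
        rw [Int.toNat_of_nonneg (Int.emod_nonneg t hn.ne'), Int.emod_def, mul_comm]
        exact (Z.periodic_flag hT).sub_int_mul_eq _
      refine ⟨⟨(t % Z.n).toNat, by have := Int.emod_lt_of_pos t hn; omega⟩, ?_, hmod⟩
      simpa only [Set.mem_ofPred_eq, hmod] using ht
  rw [← himage, Set.ncard_image_of_injective _ hinj, faceCount, ← Nat.card_coe_set_eq]
  rfl

end Zigzag

lemma IsTriangulation.ncard_setOf_verts_eq (hT : T.IsTriangulation) {F : Finset V}
    (hF : F ∈ T.faces) : {a : Flag T | a.verts = F}.ncard = 6 := by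
  obtain ⟨x, y, z, hxy, hxz, hyz, rfl⟩ := Finset.card_eq_three.mp (hT.face_card F hF)
  rw [← ncard_setOf_triple_eq hxy hxz hyz,
    ← Set.ncard_image_of_injective _ Flag.toTriple_injective]
  congr 1
  ext ⟨a, b, c⟩
  constructor
  · rintro ⟨f, hf, h⟩
    rw [← h]
    exact hf
  · intro h
    exact ⟨⟨a, b, c, (show ({a, b, c} : Finset V) = {x, y, z} from h) ▸ hF⟩, h, rfl⟩

lemma ZKnotted.exists_flag_eq (hz : T.ZKnotted) (hT : T.IsTriangulation) (Z : T.Zigzag)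
    (a : Flag T) : (∃ i, Z.flag hT i = a) ∨ ∃ i, (Z.flag hT i).reverse = a := by
  rcases hz.2 Z (a.toZigzag hT) with ⟨k, hk⟩ | ⟨k, hk⟩
  · refine Or.inl ⟨k, Flag.ext ?_ ?_ ?_⟩
    · simpa [Zigzag.flag] using (hk 0).symm
    · simpa [Zigzag.flag, add_comm] using (hk 1).symm
    · simpa [Zigzag.flag, add_comm] using (hk 2).symm
  · refine Or.inr ⟨k - 2, Flag.ext ?_ ?_ ?_⟩
    · simpa [Zigzag.flag, Flag.reverse] using (hk 0).symm
    · simpa [Zigzag.flag, Flag.reverse, sub_add] using (hk 1).symm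
    · simpa [Zigzag.flag, Flag.reverse] using (hk 2).symm

lemma ZKnotted.two_mul_ncard_range_flag_inter (hz : T.ZKnotted) (hT : T.IsTriangulation)
    (Z : T.Zigzag) {A : Set (Flag T)} (hA : ∀ a, a.reverse ∈ A ↔ a ∈ A) :
    2 * (Set.range (Z.flag hT) ∩ A).ncard = A.ncard := by
  have := Flag.finite hT
  set B := Set.range (Z.flag hT) ∩ A
  have hsplit : A = B ∪ Flag.reverse '' B := by
    ext a
    constructor
    · intro ha
      rcases hz.exists_flag_eq hT Z a with ⟨i, rfl⟩ | ⟨i, rfl⟩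
      · exact Or.inl ⟨⟨i, rfl⟩, ha⟩
      · exact Or.inr ⟨Z.flag hT i, ⟨⟨i, rfl⟩, (hA _).mp ha⟩, rfl⟩
    · rintro (⟨-, ha⟩ | ⟨b, ⟨-, hb⟩, rfl⟩)
      · exact ha
      · exact (hA b).mpr hb
  have hdisj : Disjoint B (Flag.reverse '' B) := by
    rw [Set.disjoint_left]
    rintro _ ⟨⟨i, rfl⟩, -⟩ ⟨_, ⟨⟨j, rfl⟩, -⟩, h⟩
    exact Z.flag_ne_reverse_flag hT i j h.symm
  conv_rhs => rw [hsplit]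
  rw [Set.ncard_union_eq hdisj, Set.ncard_image_of_injective _ Flag.reverse_injective, two_mul]

end PreTriangulation

open PreTriangulation

theorem statement_3 {V : Type u} [DecidableEq V] (T : PreTriangulation V)
    (hT : T.IsTriangulation) (hz : T.ZKnotted) (Z : T.Zigzag)
    (F : Finset V) (hF : F ∈ T.faces) :
    Z.faceCount F = 3 := by
  have hhalf := hz.two_mul_ncard_range_flag_inter hT Z (A := {a | a.verts = F})
    fun a => by simp
  rw [hT.ncard_setOf_verts_eq hF, ← Z.faceCount_eq_ncard hT F] at hhalf
  omega
end

section
/- Let n = 2k with k odd and k ≥ 3. Then the bipyramid BP_n has exactly two zigzags up to cyclic shift and reversal, namely the cyclic sequence a, 1, 2, b, 3, 4, …, a, n−1, n, b, 1, 2, a, 3, 4, …, b, n−1, n and the cyclic sequence a, 2, 3, b, …, b, n−2, n−1, a, n, 1, b, 2, 3, a, …, a, n−2, n−1, b, n, 1. -/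
universe u v

open PreTriangulation

/-!
In a triangulation in which every edge lies in exactly two faces, a zigzag is determined by any
three consecutive vertices: the next face is the other face on the last edge, and the next vertex
is its third vertex. Hence two zigzags are equivalent as soon as three consecutive vertices of one
occur consecutively, forwards or backwards, in the other.

In `BP (2k)` the sequence `bpZigSeq (2k) c` consists of the windows `apex, 2q + c, 2q + c + 1`,
the apex alternating with the parity of `q`. For odd `k` its minimal period is `6k`, and replacing
`q` by `q + k` flips the apex while fixing the rim vertices; so every ordering of every face
`{apex, u, u + 1}` occurs, forwards or backwards, in the sequence whose offset `c ∈ {0, 1}` is the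
parity of `u`. The two sequences are not equivalent: with offset `0` the rim vertex after an apex
is always even.
-/

theorem Set.eq_of_mem_of_ncard_eq_two {α : Type*} {s : Set α} (hs : s.ncard = 2) {a b c : α}
    (ha : a ∈ s) (hb : b ∈ s) (hc : c ∈ s) (hba : b ≠ a) (hca : c ≠ a) : b = c := by
  obtain ⟨p, q, -, rfl⟩ := Set.ncard_eq_two.mp hs
  simp only [Set.mem_insert_iff, Set.mem_singleton_iff] at ha hb hc
  grind

theorem Finset.eq_of_mem_of_card_eq_three {α : Type*} [DecidableEq α] {s : Finset α}
    (hs : s.card = 3) {a b x y : α} (ha : a ∈ s) (hb : b ∈ s) (hx : x ∈ s) (hy : y ∈ s)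
    (hab : a ≠ b) (hxa : x ≠ a) (hxb : x ≠ b) (hya : y ≠ a) (hyb : y ≠ b) : x = y := by
  by_contra hxy
  have hsub : ({a, b, x, y} : Finset α) ⊆ s := by
    simp [Finset.insert_subset_iff, ha, hb, hx, hy]
  have := Finset.card_le_card hsub
  rw [Finset.card_insert_of_notMem (by simp [hab, hxa.symm, hya.symm]),
    Finset.card_insert_of_notMem (by simp [hxb.symm, hyb.symm]),
    Finset.card_pair hxy] at this
  omega

theorem ZMod.natCast_ne_zero_of_lt {n m : ℕ} (h0 : 0 < m) (hm : m < n) : (m : ZMod n) ≠ 0 := by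
  rw [Ne, ZMod.natCast_eq_zero_iff]
  exact fun h => absurd (Nat.le_of_dvd h0 h) (by omega)

theorem ZMod.exists_eq_two_mul_add {k : ℕ} (u : ZMod (2 * k)) :
    ∃ (q : ℤ) (c : ZMod (2 * k)), (c = 0 ∨ c = 1) ∧ u = 2 * q + c := by
  obtain ⟨z, rfl⟩ := ZMod.intCast_surjective u
  refine ⟨z / 2, ((z % 2 : ℤ) : ZMod (2 * k)), ?_, ?_⟩
  · rcases Int.emod_two_eq_zero_or_one z with h | h <;> simp [h]
  · conv_lhs => rw [← Int.mul_ediv_add_emod z 2]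
    push_cast
    ring

theorem ZMod.two_mul_ne_one {k : ℕ} (u : ZMod (2 * k)) : 2 * u ≠ 1 := fun h => by
  have h2 := congrArg (ZMod.castHom (dvd_mul_right 2 k) (ZMod 2)) h
  simp only [map_mul, map_one, map_ofNat, show (2 : ZMod 2) = 0 from rfl, zero_mul] at h2
  exact zero_ne_one h2

theorem ZMod.exists_two_mul_eq_two_mul_of_odd {k : ℕ} (hk : Odd k) (b : Bool) (q₀ : ℤ) :
    ∃ q : ℤ, decide (q % 2 = 0) = b ∧ (2 * q : ZMod (2 * k)) = 2 * q₀ := by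
  by_cases h : decide (q₀ % 2 = 0) = b
  · exact ⟨q₀, h, rfl⟩
  · obtain ⟨m, hm⟩ := hk
    refine ⟨q₀ + k, ?_, ?_⟩
    · rcases b <;> simp_all <;> omega
    · have h0 : ((2 * k : ℕ) : ZMod (2 * k)) = 0 := ZMod.natCast_self _
      push_cast at h0 ⊢
      linear_combination h0

theorem Int.toNat_three_mul_add_emod {k : ℕ} (hk : 0 < k) (q : ℤ) {r : ℕ} (hr : r < 3) :
    ((3 * q + r) % (3 * ((2 * k : ℕ) : ℤ))).toNat = 3 * (q % (2 * k)).toNat + r := by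
  have h0 : 0 ≤ q % (2 * k) := Int.emod_nonneg q (by omega)
  have hlt : q % (2 * k) < 2 * k := Int.emod_lt_of_pos q (by omega)
  rw [show 3 * q + r = (3 * (q % (2 * k)) + r) + 3 * ((2 * k : ℕ) : ℤ) * (q / (2 * k)) by
      push_cast; linear_combination 3 * (Int.emod_add_mul_ediv q (2 * k)).symm,
    Int.add_mul_emod_self_left, Int.emod_eq_of_lt (by omega) (by push_cast; omega)]
  omega

theorem ZMod.natCast_toNat_emod {k : ℕ} (hk : 0 < k) (q : ℤ) :
    (((q % (2 * k)).toNat : ℕ) : ZMod (2 * k)) = q := by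
  rw [← Int.cast_natCast, Int.toNat_of_nonneg (Int.emod_nonneg q (by omega))]
  exact_mod_cast ZMod.intCast_mod q (2 * k)

namespace PreTriangulation.Zigzag

variable {V : Type*} [DecidableEq V] {T : PreTriangulation V}

theorem seq_mem_face (Z : T.Zigzag) (i : ℤ) {j : ℤ} (hj : j = i ∨ j = i + 1 ∨ j = i + 2) :
    Z.seq j ∈ Z.face i := by
  have h := Z.subset_face i
  rw [Finset.insert_subset_iff, Finset.insert_subset_iff, Finset.singleton_subset_iff] at h
  rcases hj with rfl | rfl | rfl
  exacts [h.1, h.2.1, h.2.2]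

theorem seq_ne_seq_add_two_s18
    (htwo : ∀ x y, T.graph.Adj x y → {F | F ∈ T.faces ∧ x ∈ F ∧ y ∈ F}.ncard = 2)
    (Z : T.Zigzag) (i : ℤ) : Z.seq i ≠ Z.seq (i + 2) := by
  intro h
  obtain ⟨F₁, F₂, hF, hset⟩ := Set.ncard_eq_two.mp (htwo _ _ (Z.seq_adj i))
  have hface : ∀ F ∈ ({F₁, F₂} : Set (Finset V)), F = Z.face i := by
    rintro F hF'
    rw [← hset] at hF'
    refine Z.face_unique i F hF'.1 ?_
    simp [Finset.insert_subset_iff, ← h, hF'.2.1, hF'.2.2]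
  exact hF ((hface F₁ (by simp)).trans (hface F₂ (by simp)).symm)

theorem seq_ne_seq
    (htwo : ∀ x y, T.graph.Adj x y → {F | F ∈ T.faces ∧ x ∈ F ∧ y ∈ F}.ncard = 2)
    (Z : T.Zigzag) {i j : ℤ} (hij : i < j) (hji : j ≤ i + 2) : Z.seq i ≠ Z.seq j := by
  obtain rfl | rfl : j = i + 1 ∨ j = i + 2 := by omega
  exacts [Z.seq_ne i, seq_ne_seq_add_two_s18 htwo Z i]

theorem seq_add_three_eq_of_tripleAt (hcard : ∀ F ∈ T.faces, F.card = 3)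
    (htwo : ∀ x y, T.graph.Adj x y → {F | F ∈ T.faces ∧ x ∈ F ∧ y ∈ F}.ncard = 2)
    {Z W : T.Zigzag} {i j : ℤ} {x y z : V} (hZ : Z.TripleAt i x y z) (hW : W.TripleAt j x y z) :
    Z.seq (i + 3) = W.seq (j + 3) := by
  obtain ⟨hZx, hZy, hZz⟩ := hZ
  obtain ⟨hWx, hWy, hWz⟩ := hW
  have hface : W.face j = Z.face i := by
    refine Z.face_unique i _ (W.face_mem j) ?_
    rw [hZx, hZy, hZz, ← hWx, ← hWy, ← hWz]
    exact W.subset_face j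
  -- `Z.face (i+1)` and `W.face (j+1)` are both the face across the edge `{y, z}` from `Z.face i`.
  have hnext : Z.face (i + 1) = W.face (j + 1) := by
    have hyz : T.graph.Adj y z := by
      simpa [hZy, hZz, add_assoc] using Z.seq_adj (i + 1)
    refine Set.eq_of_mem_of_ncard_eq_two (htwo y z hyz) (a := Z.face i)
      ⟨Z.face_mem i, ?_, ?_⟩ ⟨Z.face_mem (i + 1), ?_, ?_⟩ ⟨W.face_mem (j + 1), ?_, ?_⟩
      (Z.face_ne i).symm (hface ▸ (W.face_ne j).symm)
    · exact hZy ▸ Z.seq_mem_face i (by omega)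
    · exact hZz ▸ Z.seq_mem_face i (by omega)
    · exact hZy ▸ Z.seq_mem_face (i + 1) (by omega)
    · exact hZz ▸ Z.seq_mem_face (i + 1) (by omega)
    · exact hWy ▸ W.seq_mem_face (j + 1) (by omega)
    · exact hWz ▸ W.seq_mem_face (j + 1) (by omega)
  refine Finset.eq_of_mem_of_card_eq_three (hcard _ (Z.face_mem (i + 1)))
    (Z.seq_mem_face (i + 1) (j := i + 1) (by omega)) (Z.seq_mem_face (i + 1) (j := i + 2) (by omega))
    (Z.seq_mem_face (i + 1) (by omega)) (hnext ▸ W.seq_mem_face (j + 1) (by omega))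
    (seq_ne_seq htwo Z (by omega) (by omega)) (seq_ne_seq htwo Z (by omega) (by omega)).symm
    (seq_ne_seq htwo Z (by omega) (by omega)).symm ?_ ?_
  · rw [hZy, ← hWy]; exact (seq_ne_seq htwo W (by omega) (by omega)).symm
  · rw [hZz, ← hWz]; exact (seq_ne_seq htwo W (by omega) (by omega)).symm

def reverse (Z : T.Zigzag) : T.Zigzag where
  n := Z.n
  three_lt_n := Z.three_lt_n
  seq i := Z.seq (-i)
  periodic i := by convert (Z.periodic (-i - Z.n)).symm using 2 <;> ring
  n_minimal m hm h := Z.n_minimal m hm fun i => by convert (h (-i - m)).symm using 2 <;> ring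
  seq_ne i := by convert (Z.seq_ne (-i - 1)).symm using 2 <;> ring
  seq_adj i := by convert (Z.seq_adj (-i - 1)).symm using 2 <;> ring
  face i := Z.face (-i - 2)
  face_mem i := Z.face_mem _
  subset_face i := by
    have h := Z.subset_face (-i - 2)
    simp only [Finset.insert_subset_iff, Finset.singleton_subset_iff] at h ⊢
    ring_nf at h ⊢
    tauto
  face_unique i G hG hsub := by
    refine Z.face_unique _ G hG ?_
    simp only [Finset.insert_subset_iff, Finset.singleton_subset_iff] at hsub ⊢
    ring_nf at hsub ⊢
    tauto
  face_ne i := by convert (Z.face_ne (-i - 3)).symm using 2 <;> ring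

theorem TripleAt.reverse {Z : T.Zigzag} {i : ℤ} {x y z : V} (h : Z.TripleAt i x y z) :
    Z.reverse.TripleAt (-i - 2) z y x := by
  obtain ⟨hx, hy, hz⟩ := h
  refine ⟨?_, ?_, ?_⟩ <;> simp only [Zigzag.reverse]
  · rw [← hz]; ring_nf
  · rw [← hy]; ring_nf
  · rw [← hx]; ring_nf

theorem triple_mem_faces (hcard : ∀ F ∈ T.faces, F.card = 3)
    (htwo : ∀ x y, T.graph.Adj x y → {F | F ∈ T.faces ∧ x ∈ F ∧ y ∈ F}.ncard = 2)
    (Z : T.Zigzag) (i : ℤ) : ({Z.seq i, Z.seq (i + 1), Z.seq (i + 2)} : Finset V) ∈ T.faces := by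
  convert Z.face_mem i
  refine Finset.eq_of_subset_of_card_le (Z.subset_face i) ?_
  rw [hcard _ (Z.face_mem i), Finset.card_triple_eq_three_iff.mpr
    ⟨seq_ne_seq htwo Z (by omega) (by omega), seq_ne_seq htwo Z (by omega) (by omega),
      seq_ne_seq htwo Z (by omega) (by omega)⟩]

theorem seq_sub_one_eq_of_tripleAt (hcard : ∀ F ∈ T.faces, F.card = 3)
    (htwo : ∀ x y, T.graph.Adj x y → {F | F ∈ T.faces ∧ x ∈ F ∧ y ∈ F}.ncard = 2)
    {Z W : T.Zigzag} {i j : ℤ} {x y z : V} (hZ : Z.TripleAt i x y z) (hW : W.TripleAt j x y z) :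
    Z.seq (i - 1) = W.seq (j - 1) := by
  have h := seq_add_three_eq_of_tripleAt hcard htwo hZ.reverse hW.reverse
  simp only [Zigzag.reverse] at h
  convert h using 2 <;> ring

theorem seq_add_eq_of_tripleAt (hcard : ∀ F ∈ T.faces, F.card = 3)
    (htwo : ∀ x y, T.graph.Adj x y → {F | F ∈ T.faces ∧ x ∈ F ∧ y ∈ F}.ncard = 2)
    {Z W : T.Zigzag} {i j : ℤ} {x y z : V} (hZ : Z.TripleAt i x y z) (hW : W.TripleAt j x y z)
    (m : ℤ) : Z.seq (i + m) = W.seq (j + m) := by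
  have hW' : ∀ m : ℤ, W.TripleAt (j + m) (W.seq (j + m)) (W.seq (j + m + 1)) (W.seq (j + m + 2)) :=
    fun m => ⟨rfl, rfl, rfl⟩
  suffices h : ∀ m : ℤ,
      Z.TripleAt (i + m) (W.seq (j + m)) (W.seq (j + m + 1)) (W.seq (j + m + 2)) from (h m).1
  intro m
  induction m using Int.induction_on with
  | zero => simpa [← hW.1, ← hW.2.1, ← hW.2.2] using hZ
  | succ m ih =>
    have h3 := seq_add_three_eq_of_tripleAt hcard htwo ih (hW' m)
    refine ⟨?_, ?_, ?_⟩
    · convert ih.2.1 using 2 <;> ring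
    · convert ih.2.2 using 2 <;> ring
    · convert h3 using 2 <;> ring
  | pred m ih =>
    have h1 := seq_sub_one_eq_of_tripleAt hcard htwo ih (hW' (-m))
    refine ⟨?_, ?_, ?_⟩
    · convert h1 using 2 <;> ring
    · convert ih.1 using 2 <;> ring
    · convert ih.2.1 using 2 <;> ring

def ofTriples (hcard : ∀ F ∈ T.faces, F.card = 3)
    (hadj : ∀ F ∈ T.faces, ∀ x ∈ F, ∀ y ∈ F, x ≠ y → T.graph.Adj x y)
    (f : ℤ → V) (n : ℕ) (three_lt_n : 3 < n) (periodic : ∀ i, f (i + n) = f i)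
    (n_minimal : ∀ m : ℕ, 0 < m → (∀ i, f (i + m) = f i) → n ≤ m)
    (triple_mem : ∀ i, ({f i, f (i + 1), f (i + 2)} : Finset V) ∈ T.faces)
    (ne_add_three : ∀ i, f i ≠ f (i + 3)) : T.Zigzag where
  n := n
  three_lt_n := three_lt_n
  seq := f
  periodic := periodic
  n_minimal := n_minimal
  seq_ne i := (Finset.card_triple_eq_three_iff.mp (hcard _ (triple_mem i))).1
  seq_adj i := hadj _ (triple_mem i) _ (by simp) _ (by simp)
    (Finset.card_triple_eq_three_iff.mp (hcard _ (triple_mem i))).1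
  face i := {f i, f (i + 1), f (i + 2)}
  face_mem := triple_mem
  subset_face _ := subset_rfl
  face_unique i G hG hsub :=
    (Finset.eq_of_subset_of_card_le hsub (by rw [hcard G hG, hcard _ (triple_mem i)])).symm
  face_ne i h := by
    have hd := Finset.card_triple_eq_three_iff.mp (hcard _ (triple_mem (i + 1)))
    have hmem : f (i + 1 + 2) ∈ ({f i, f (i + 1), f (i + 2)} : Finset V) := h ▸ by simp
    simp only [show i + 1 + 1 = i + 2 by ring, show i + 1 + 2 = i + 3 by ring,
      Finset.mem_insert, Finset.mem_singleton] at hd hmem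
    rcases hmem with h' | h' | h'
    exacts [ne_add_three i h'.symm, hd.2.1 h'.symm, hd.2.2 h'.symm]

end PreTriangulation.Zigzag

namespace PreTriangulation

variable {V : Type*} [DecidableEq V] {T : PreTriangulation V}

theorem zigzagEquiv_of_tripleAt (hcard : ∀ F ∈ T.faces, F.card = 3)
    (htwo : ∀ x y, T.graph.Adj x y → {F | F ∈ T.faces ∧ x ∈ F ∧ y ∈ F}.ncard = 2)
    {Z W : T.Zigzag} {i j : ℤ} {x y z : V} (hZ : Z.TripleAt i x y z) (hW : W.TripleAt j x y z) :
    ZigzagEquiv Z W :=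
  Or.inl ⟨i - j, fun m => by
    convert (Zigzag.seq_add_eq_of_tripleAt hcard htwo hZ hW (m - j)).symm using 2 <;> ring⟩

theorem zigzagEquiv_of_tripleAt_reverse (hcard : ∀ F ∈ T.faces, F.card = 3)
    (htwo : ∀ x y, T.graph.Adj x y → {F | F ∈ T.faces ∧ x ∈ F ∧ y ∈ F}.ncard = 2)
    {Z W : T.Zigzag} {i j : ℤ} {x y z : V} (hZ : Z.TripleAt i x y z) (hW : W.TripleAt j z y x) :
    ZigzagEquiv Z W :=
  Or.inr ⟨i + j + 2, fun m => by
    have h := Zigzag.seq_add_eq_of_tripleAt hcard htwo hZ hW.reverse (j + 2 - m)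
    simp only [Zigzag.reverse] at h
    convert h.symm using 2 <;> ring⟩

theorem ZigzagEquiv.exists_tripleAt {Z W : T.Zigzag} (h : ZigzagEquiv Z W) {i : ℤ} {x y z : V}
    (hW : W.TripleAt i x y z) : ∃ j, Z.TripleAt j x y z ∨ Z.TripleAt j z y x := by
  obtain ⟨hx, hy, hz⟩ := hW
  rcases h with ⟨p, hp⟩ | ⟨p, hp⟩
  · refine ⟨i + p, Or.inl ⟨?_, ?_, ?_⟩⟩
    · rw [← hx, hp]
    · rw [← hy, hp]; ring_nf
    · rw [← hz, hp]; ring_nf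
  · refine ⟨p - i - 2, Or.inr ⟨?_, ?_, ?_⟩⟩
    · rw [← hz, hp]; ring_nf
    · rw [← hy, hp]; ring_nf
    · rw [← hx, hp]; ring_nf

section Bipyramid

variable {n : ℕ}

theorem bp_face_card (hn : 1 < n) : ∀ F ∈ (bp n).faces, F.card = 3 := by
  have : Fact (1 < n) := ⟨hn⟩
  rintro F ⟨s, i, rfl⟩
  simp

theorem bp_face_adj : ∀ F ∈ (bp n).faces, ∀ x ∈ F, ∀ y ∈ F, x ≠ y → (bp n).graph.Adj x y := by
  rintro F ⟨s, i, rfl⟩ x hx y hy hxy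
  simp only [Finset.mem_insert, Finset.mem_singleton] at hx hy
  rcases hx with rfl | rfl | rfl <;> rcases hy with rfl | rfl | rfl <;>
    first | exact absurd rfl hxy | trivial | exact ⟨fun h => hxy (congrArg _ h), by simp⟩

theorem bp_faces_apex_edge (s : Bool) (v : ZMod n) :
    {F | F ∈ (bp n).faces ∧ Sum.inl s ∈ F ∧ Sum.inr v ∈ F} =
      {{Sum.inl s, Sum.inr (v - 1), Sum.inr v}, {Sum.inl s, Sum.inr v, Sum.inr (v + 1)}} := by
  ext F
  simp only [Set.mem_ofPred_eq, Set.mem_insert_iff, Set.mem_singleton_iff]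
  constructor
  · rintro ⟨⟨t, j, rfl⟩, hs, hv⟩
    simp only [Finset.mem_insert, Finset.mem_singleton, Sum.inl.injEq, Sum.inr.injEq,
      reduceCtorEq, false_or, or_false] at hs hv
    subst hs
    rcases hv with rfl | rfl
    · exact Or.inr rfl
    · exact Or.inl (by simp)
  · rintro (rfl | rfl)
    · exact ⟨⟨s, v - 1, by simp⟩, by simp, by simp⟩
    · exact ⟨⟨s, v, rfl⟩, by simp, by simp⟩

theorem bp_faces_rim_edge (hn : 2 < n) (u : ZMod n) :
    {F | F ∈ (bp n).faces ∧ Sum.inr u ∈ F ∧ Sum.inr (u + 1) ∈ F} =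
      {{Sum.inl true, Sum.inr u, Sum.inr (u + 1)}, {Sum.inl false, Sum.inr u, Sum.inr (u + 1)}} := by
  ext F
  simp only [Set.mem_ofPred_eq, Set.mem_insert_iff, Set.mem_singleton_iff]
  constructor
  · rintro ⟨⟨t, j, rfl⟩, hu, hu'⟩
    simp only [Finset.mem_insert, Finset.mem_singleton, Sum.inr.injEq,
      reduceCtorEq, false_or] at hu hu'
    have h1 : (1 : ZMod n) ≠ 0 := by exact_mod_cast ZMod.natCast_ne_zero_of_lt one_pos (by omega)
    have h2 : (2 : ZMod n) ≠ 0 := by exact_mod_cast ZMod.natCast_ne_zero_of_lt two_pos hn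
    obtain rfl : u = j := by
      refine hu.resolve_right fun h => ?_
      subst h
      rcases hu' with h | h
      · exact h2 (by linear_combination h)
      · exact h1 (by linear_combination h)
    cases t <;> simp
  · rintro (rfl | rfl) <;> exact ⟨⟨_, u, rfl⟩, by simp, by simp⟩

theorem bp_edge_in_two_faces (hn : 2 < n) (x y : Bool ⊕ ZMod n) (hxy : (bp n).graph.Adj x y) :
    {F | F ∈ (bp n).faces ∧ x ∈ F ∧ y ∈ F}.ncard = 2 := by
  have h1 : (1 : ZMod n) ≠ 0 := by exact_mod_cast ZMod.natCast_ne_zero_of_lt one_pos (by omega)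
  have h2 : (2 : ZMod n) ≠ 0 := by exact_mod_cast ZMod.natCast_ne_zero_of_lt two_pos hn
  have hsymm : ∀ x y : Bool ⊕ ZMod n, {F | F ∈ (bp n).faces ∧ x ∈ F ∧ y ∈ F} =
      {F | F ∈ (bp n).faces ∧ y ∈ F ∧ x ∈ F} := fun x y => by
    simp only [and_comm (a := x ∈ _)]
  have apex (s : Bool) (v : ZMod n) :
      {F | F ∈ (bp n).faces ∧ Sum.inl s ∈ F ∧ Sum.inr v ∈ F}.ncard = 2 := by
    rw [bp_faces_apex_edge, Set.ncard_pair]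
    intro h
    have hv : (Sum.inr (v + 1) : Bool ⊕ ZMod n) ∈
        ({Sum.inl s, Sum.inr (v - 1), Sum.inr v} : Finset _) := h ▸ by simp
    simp only [Finset.mem_insert, Finset.mem_singleton, Sum.inr.injEq, reduceCtorEq,
      false_or] at hv
    rcases hv with hv | hv
    · exact h2 (by linear_combination hv)
    · exact h1 (by linear_combination hv)
  have rim (u : ZMod n) :
      {F | F ∈ (bp n).faces ∧ Sum.inr u ∈ F ∧ Sum.inr (u + 1) ∈ F}.ncard = 2 := by
    rw [bp_faces_rim_edge hn, Set.ncard_pair]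
    intro h
    have ht : (Sum.inl true : Bool ⊕ ZMod n) ∈
        ({Sum.inl false, Sum.inr u, Sum.inr (u + 1)} : Finset _) := h ▸ by simp
    simp at ht
  rcases x with s | u <;> rcases y with t | v
  · exact hxy.elim
  · exact apex s v
  · rw [hsymm]; exact apex t u
  · obtain ⟨-, rfl | rfl⟩ := hxy
    · exact rim u
    · rw [hsymm]; exact rim v

end Bipyramid

section bpZigSeq

variable {k : ℕ} (c : ZMod (2 * k))

theorem bpZigSeq_three_mul (hk : 0 < k) (q : ℤ) :
    bpZigSeq (2 * k) c (3 * q) = Sum.inl (decide (q % 2 = 0)) := by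
  have h := Int.toNat_three_mul_add_emod hk q (r := 0) (by omega)
  simp only [Nat.cast_zero, add_zero] at h
  simp only [bpZigSeq, h, Nat.mul_mod_right, if_true, Sum.inl.injEq, decide_eq_decide]
  rw [Nat.mul_div_cancel_left _ (by omega)]
  have := Int.emod_emod_of_dvd q (show (2 : ℤ) ∣ 2 * k from ⟨k, rfl⟩)
  have := Int.emod_nonneg q (show (2 * k : ℤ) ≠ 0 by omega)
  omega

theorem bpZigSeq_three_mul_add_one (hk : 0 < k) (q : ℤ) :
    bpZigSeq (2 * k) c (3 * q + 1) = Sum.inr (2 * q + c) := by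
  have h := Int.toNat_three_mul_add_emod hk q (r := 1) (by omega)
  simp only [Nat.cast_one] at h
  simp only [bpZigSeq, h, show ∀ t : ℕ, (3 * t + 1) % 3 = 1 by omega,
    show ∀ t : ℕ, (3 * t + 1) / 3 = t by omega]
  simp [ZMod.natCast_toNat_emod hk]

theorem bpZigSeq_three_mul_add_two (hk : 0 < k) (q : ℤ) :
    bpZigSeq (2 * k) c (3 * q + 2) = Sum.inr (2 * q + c + 1) := by
  have h := Int.toNat_three_mul_add_emod hk q (r := 2) (by omega)
  simp only [Nat.cast_ofNat] at h
  simp only [bpZigSeq, h, show ∀ t : ℕ, (3 * t + 2) % 3 = 2 by omega,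
    show ∀ t : ℕ, (3 * t + 2) / 3 = t by omega]
  simp [ZMod.natCast_toNat_emod hk]
  ring

theorem bpZigSeq_add_three (hk : 0 < k) (i : ℤ) :
    bpZigSeq (2 * k) c (i + 3) = Sum.map (!·) (· + 2) (bpZigSeq (2 * k) c i) := by
  obtain ⟨q, rfl | rfl | rfl⟩ : ∃ q, i = 3 * q ∨ i = 3 * q + 1 ∨ i = 3 * q + 2 := ⟨i / 3, by omega⟩
  · rw [show 3 * q + 3 = 3 * (q + 1) by ring, bpZigSeq_three_mul c hk, bpZigSeq_three_mul c hk]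
    simp only [Sum.map_inl, Sum.inl.injEq]
    by_cases h : q % 2 = 0 <;> simp [h] <;> omega
  · rw [show 3 * q + 1 + 3 = 3 * (q + 1) + 1 by ring, bpZigSeq_three_mul_add_one c hk,
      bpZigSeq_three_mul_add_one c hk]
    simp only [Sum.map_inr, Sum.inr.injEq]
    push_cast; ring
  · rw [show 3 * q + 2 + 3 = 3 * (q + 1) + 2 by ring, bpZigSeq_three_mul_add_two c hk,
      bpZigSeq_three_mul_add_two c hk]
    simp only [Sum.map_inr, Sum.inr.injEq]
    push_cast; ring

theorem bpZigSeq_window (hk : 0 < k) (q : ℤ) :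
    bpZigSeq (2 * k) c (3 * q) = Sum.inl (decide (q % 2 = 0)) ∧
      bpZigSeq (2 * k) c (3 * q + 1) = Sum.inr (2 * q + c) ∧
      bpZigSeq (2 * k) c (3 * q + 2) = Sum.inr (2 * q + c + 1) ∧
      bpZigSeq (2 * k) c (3 * q + 3) = Sum.inl (!decide (q % 2 = 0)) ∧
      bpZigSeq (2 * k) c (3 * q + 4) = Sum.inr (2 * q + c + 2) := by
  refine ⟨bpZigSeq_three_mul c hk q, bpZigSeq_three_mul_add_one c hk q,
    bpZigSeq_three_mul_add_two c hk q, ?_, ?_⟩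
  · rw [bpZigSeq_add_three c hk, bpZigSeq_three_mul c hk, Sum.map_inl]
  · rw [show 3 * q + 4 = 3 * q + 1 + 3 by ring, bpZigSeq_add_three c hk,
      bpZigSeq_three_mul_add_one c hk, Sum.map_inr, add_assoc]

theorem exists_eq_three_mul_of_bpZigSeq_eq_inl (hk : 0 < k) {i : ℤ} {s : Bool}
    (h : bpZigSeq (2 * k) c i = Sum.inl s) : ∃ q, i = 3 * q := by
  obtain ⟨q, rfl | rfl | rfl⟩ : ∃ q, i = 3 * q ∨ i = 3 * q + 1 ∨ i = 3 * q + 2 := ⟨i / 3, by omega⟩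
  · exact ⟨q, rfl⟩
  · simp [bpZigSeq_three_mul_add_one c hk] at h
  · simp [bpZigSeq_three_mul_add_two c hk] at h

theorem bpZigSeq_add_six_mul (i : ℤ) :
    bpZigSeq (2 * k) c (i + (6 * k : ℕ)) = bpZigSeq (2 * k) c i := by
  simp only [bpZigSeq]
  rw [show i + ((6 * k : ℕ) : ℤ) = i + 3 * ((2 * k : ℕ) : ℤ) * 1 by push_cast; ring,
    Int.add_mul_emod_self_left]

theorem six_mul_le_of_bpZigSeq_periodic (hk : Odd k) {m : ℕ} (hm : 0 < m)
    (h : ∀ i, bpZigSeq (2 * k) c (i + m) = bpZigSeq (2 * k) c i) : 6 * k ≤ m := by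
  -- `m = 3q` as it maps an apex to an apex; `q` is even as the apices alternate, and `k ∣ q` as
  -- the rim advances by `2q`. Since `k` is odd, `2k ∣ q`.
  have hk0 : 0 < k := hk.pos
  have h0 := h (3 * 0)
  rw [bpZigSeq_three_mul c hk0, mul_zero, zero_add] at h0
  obtain ⟨q, hq⟩ := exists_eq_three_mul_of_bpZigSeq_eq_inl c hk0 h0
  rw [hq, bpZigSeq_three_mul c hk0] at h0
  have hq2 : Even q := by simpa [Int.even_iff] using h0
  have h1 := h (3 * 0 + 1)
  rw [show 3 * 0 + 1 + (m : ℤ) = 3 * q + 1 by omega, bpZigSeq_three_mul_add_one c hk0,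
    bpZigSeq_three_mul_add_one c hk0, Sum.inr.injEq] at h1
  have h2q : (((2 * q : ℤ)) : ZMod (2 * k)) = 0 := by push_cast; linear_combination h1
  obtain ⟨t, ht⟩ : (k : ℤ) ∣ q := by
    rw [ZMod.intCast_zmod_eq_zero_iff_dvd] at h2q
    push_cast at h2q
    exact (mul_dvd_mul_iff_left two_ne_zero).mp h2q
  have ht2 : Even t := by
    rw [ht, Int.even_mul] at hq2
    exact hq2.resolve_left (by exact_mod_cast Nat.not_even_iff_odd.mpr hk)
  obtain ⟨t', rfl⟩ := ht2
  have : 0 < t' := by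
    by_contra! h'
    nlinarith
  nlinarith

theorem bpZigSeq_triple_mem_faces (hk : 0 < k) (i : ℤ) :
    ({bpZigSeq (2 * k) c i, bpZigSeq (2 * k) c (i + 1), bpZigSeq (2 * k) c (i + 2)} : Finset _) ∈
      (bp (2 * k)).faces := by
  obtain ⟨q, rfl | rfl | rfl⟩ : ∃ q, i = 3 * q ∨ i = 3 * q + 1 ∨ i = 3 * q + 2 :=
    ⟨i / 3, by omega⟩ <;>
  obtain ⟨h0, h1, h2, h3, h4⟩ := bpZigSeq_window c hk q
  · rw [h0, h1, h2]
    exact ⟨_, _, rfl⟩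
  · rw [show 3 * q + 1 + 1 = 3 * q + 2 by ring, show 3 * q + 1 + 2 = 3 * q + 3 by ring,
      h1, h2, h3, Finset.pair_comm, Finset.insert_comm]
    exact ⟨_, _, rfl⟩
  · rw [show 3 * q + 2 + 1 = 3 * q + 3 by ring, show 3 * q + 2 + 2 = 3 * q + 4 by ring,
      h2, h3, h4, Finset.insert_comm, show 2 * q + c + 2 = 2 * q + c + 1 + 1 by ring]
    exact ⟨_, _, rfl⟩

theorem bpZigSeq_ne_add_three (hk : 1 < k) (i : ℤ) :
    bpZigSeq (2 * k) c i ≠ bpZigSeq (2 * k) c (i + 3) := by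
  have h2 : (2 : ZMod (2 * k)) ≠ 0 := by
    exact_mod_cast ZMod.natCast_ne_zero_of_lt two_pos (by omega)
  rw [bpZigSeq_add_three c (by omega)]
  rcases bpZigSeq (2 * k) c i with s | u <;> simp [h2]

end bpZigSeq

variable {k : ℕ}

def bpZigzag (hk : 1 < k) (hkodd : Odd k) (c : ZMod (2 * k)) : (bp (2 * k)).Zigzag :=
  Zigzag.ofTriples (bp_face_card (by omega)) bp_face_adj (bpZigSeq (2 * k) c) (6 * k) (by omega)
    (bpZigSeq_add_six_mul c) (fun _ => six_mul_le_of_bpZigSeq_periodic c hkodd)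
    (bpZigSeq_triple_mem_faces c (by omega)) (bpZigSeq_ne_add_three c hk)

@[simp]
theorem bpZigzag_seq (hk : 1 < k) (hkodd : Odd k) (c : ZMod (2 * k)) :
    (bpZigzag hk hkodd c).seq = bpZigSeq (2 * k) c := rfl

theorem exists_bpZigzag_window (hk : 1 < k) (hkodd : Odd k) (s : Bool) (u : ZMod (2 * k)) :
    ∃ c : ZMod (2 * k), (c = 0 ∨ c = 1) ∧ ∃ i,
      (bpZigzag hk hkodd c).TripleAt i (Sum.inl s) (Sum.inr u) (Sum.inr (u + 1)) ∧
      (bpZigzag hk hkodd c).TripleAt (i + 1) (Sum.inr u) (Sum.inr (u + 1)) (Sum.inl (!s)) ∧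
      (bpZigzag hk hkodd c).TripleAt (i + 2) (Sum.inr (u + 1)) (Sum.inl (!s)) (Sum.inr (u + 2)) := by
  obtain ⟨q₀, c, hc, rfl⟩ := ZMod.exists_eq_two_mul_add u
  obtain ⟨q, rfl, hq⟩ := ZMod.exists_two_mul_eq_two_mul_of_odd hkodd s q₀
  obtain ⟨h0, h1, h2, h3, h4⟩ := bpZigSeq_window c (by omega) q
  rw [hq] at h1 h2 h4
  rw [← bpZigzag_seq hk hkodd] at h0 h1 h2 h3 h4
  refine ⟨c, hc, 3 * q, ⟨h0, h1, h2⟩, ⟨h1, ?_, ?_⟩, ⟨h2, ?_, ?_⟩⟩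
  · rwa [add_assoc]
  · rwa [add_assoc]
  · rwa [add_assoc]
  · rw [show 3 * q + 2 + 2 = 3 * q + 4 by ring, h4]

theorem exists_bpZigzag_tripleAt (hk : 1 < k) (hkodd : Odd k) {x y z : Bool ⊕ ZMod (2 * k)}
    (hface : ({x, y, z} : Finset _) ∈ (bp (2 * k)).faces) :
    ∃ c : ZMod (2 * k), (c = 0 ∨ c = 1) ∧ ∃ j,
      (bpZigzag hk hkodd c).TripleAt j x y z ∨ (bpZigzag hk hkodd c).TripleAt j z y x := by
  obtain ⟨hxy, hxz, hyz⟩ :=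
    Finset.card_triple_eq_three_iff.mp (bp_face_card (by omega) _ hface)
  obtain ⟨s, u, hF⟩ := hface
  have hmem : ∀ w ∈ ({x, y, z} : Finset _), w = Sum.inl s ∨ w = Sum.inr u ∨ w = Sum.inr (u + 1) :=
    fun w hw => by simpa [hF] using hw
  obtain ⟨c₁, hc₁, i₁, a₁, -, -⟩ := exists_bpZigzag_window hk hkodd s u
  obtain ⟨c₂, hc₂, i₂, -, a₂, -⟩ := exists_bpZigzag_window hk hkodd (!s) u
  obtain ⟨c₃, hc₃, i₃, -, -, a₃⟩ := exists_bpZigzag_window hk hkodd (!s) (u - 1)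
  rw [Bool.not_not] at a₂ a₃
  rw [sub_add_cancel, show u - 1 + 2 = u + 1 by ring] at a₃
  -- The six orderings of the face are the three windows above, read forwards or backwards.
  rcases hmem x (by simp) with rfl | rfl | rfl <;> rcases hmem y (by simp) with rfl | rfl | rfl <;>
    rcases hmem z (by simp) with rfl | rfl | rfl <;>
    first
    | exact absurd rfl hxy | exact absurd rfl hxz | exact absurd rfl hyz
    | exact ⟨c₁, hc₁, i₁, by tauto⟩ | exact ⟨c₂, hc₂, i₂ + 1, by tauto⟩
    | exact ⟨c₃, hc₃, i₃ + 2, by tauto⟩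

theorem not_zigzagEquiv_bpZigzag_zero_one (hk : 1 < k) (hkodd : Odd k) :
    ¬ ZigzagEquiv (bpZigzag hk hkodd 0) (bpZigzag hk hkodd 1) := by
  have hk0 : 0 < k := by omega
  have h2 : (2 : ZMod (2 * k)) ≠ 0 := by
    exact_mod_cast ZMod.natCast_ne_zero_of_lt two_pos (by omega)
  intro h
  obtain ⟨h₀, h₁, h₂, -⟩ := bpZigSeq_window (1 : ZMod (2 * k)) hk0 0
  have hZ₁ : (bpZigzag hk hkodd 1).TripleAt 0 (Sum.inl true) (Sum.inr 1) (Sum.inr 2) := by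
    refine ⟨?_, ?_, ?_⟩ <;> simp only [bpZigzag_seq]
    · simpa using h₀
    · simpa using h₁
    · simpa [one_add_one_eq_two] using h₂
  -- With offset `0` the rim vertex after an apex is even, and the two before it are
  -- `2q - 2, 2q - 1`; so `a, 1, 2` occurs there in neither direction.
  obtain ⟨j, ⟨hj₀, hj₁, -⟩ | ⟨hj₀, hj₁, hj₂⟩⟩ := h.exists_tripleAt hZ₁ <;>
    simp only [bpZigzag_seq] at *
  · obtain ⟨q, rfl⟩ := exists_eq_three_mul_of_bpZigSeq_eq_inl 0 hk0 hj₀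
    rw [bpZigSeq_three_mul_add_one 0 hk0, add_zero, Sum.inr.injEq] at hj₁
    exact ZMod.two_mul_ne_one _ hj₁
  · obtain ⟨q, hq⟩ := exists_eq_three_mul_of_bpZigSeq_eq_inl 0 hk0 hj₂
    rw [show j = 3 * (q - 1) + 1 by omega, bpZigSeq_three_mul_add_one 0 hk0,
      Sum.inr.injEq] at hj₀
    rw [show j + 1 = 3 * (q - 1) + 2 by omega, bpZigSeq_three_mul_add_two 0 hk0,
      Sum.inr.injEq] at hj₁
    exact h2 (by linear_combination hj₁ - hj₀)

end PreTriangulation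

theorem statement_18 (k : ℕ) (hk3 : 3 ≤ k) (hkodd : Odd k) :
    ∃ Z₁ Z₂ : (bp (2 * k)).Zigzag,
      Z₁.seq = bpZigSeq (2 * k) 0 ∧ Z₂.seq = bpZigSeq (2 * k) 1 ∧
      ¬ ZigzagEquiv Z₁ Z₂ ∧
      ∀ Z : (bp (2 * k)).Zigzag, ZigzagEquiv Z Z₁ ∨ ZigzagEquiv Z Z₂ := by
  have hk : 1 < k := by omega
  refine ⟨bpZigzag hk hkodd 0, bpZigzag hk hkodd 1, rfl, rfl,
    not_zigzagEquiv_bpZigzag_zero_one hk hkodd, fun Z => ?_⟩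
  have hcard := bp_face_card (n := 2 * k) (by omega)
  have htwo := bp_edge_in_two_faces (n := 2 * k) (by omega)
  have hZ : Z.TripleAt 0 (Z.seq 0) (Z.seq (0 + 1)) (Z.seq (0 + 2)) := ⟨rfl, rfl, rfl⟩
  obtain ⟨c, hc, j, hj⟩ := exists_bpZigzag_tripleAt hk hkodd (Z.triple_mem_faces hcard htwo 0)
  have hequiv : ZigzagEquiv Z (bpZigzag hk hkodd c) :=
    hj.elim (zigzagEquiv_of_tripleAt hcard htwo hZ)
      (zigzagEquiv_of_tripleAt_reverse hcard htwo hZ)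
  rcases hc with rfl | rfl
  exacts [Or.inl hequiv, Or.inr hequiv]
end
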